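/- arXiv:2502.06477 — 2 statements merged into one kernel-verified Lean document; each statement's English description precedes it below -/
import Mathlib

section
/- The one-step update function f associated with a switch graph is non-expansive with respect to the ℓ₁-norm: for all x, y ∈ ℝ^V with nonnegative entries, ‖f(x) - f(y)‖₁ ≤ ‖x - y‖₁. -/
/-! Both `h0` and `h1` are monotone and `h0 + h1 = id`, so the difference `x u - y u` splits into
two differences of the same sign whose absolute values add up to `|x u - y u|`. Sending them
along `s0` and `s1` and adding them up at the targets can only cancel mass, never create it. -/

open Finset

noncomputable def h0 (x : ℝ) : ℝ := min (x - ⌊x / 2⌋) ⌈x / 2⌉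
noncomputable def h1 (x : ℝ) : ℝ := max (⌊x / 2⌋ : ℝ) (x - ⌈x / 2⌉)

/-- One-step update of the switch graph `(V, s0, s1)`. -/
noncomputable def oneStep {V : Type*} [Fintype V] [DecidableEq V]
    (s0 s1 : V → V) (x : V → ℝ) : V → ℝ :=
  fun v => (∑ u : V, if s0 u = v then h0 (x u) else 0)
    + (∑ u : V, if s1 u = v then h1 (x u) else 0)

theorem abs_sub_add_abs_sub_of_monotone {α : Type*} [AddCommGroup α] [LinearOrder α]
    [IsOrderedAddMonoid α] {f g : α → α} (hf : Monotone f) (hg : Monotone g)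
    (hfg : ∀ x, f x + g x = x) (a b : α) :
    |f a - f b| + |g a - g b| = |a - b| := by
  have hsplit : a - b = (f a - f b) + (g a - g b) := by
    rw [sub_add_sub_comm, hfg, hfg]
  rw [hsplit, eq_comm, abs_add_eq_add_abs_iff]
  rcases le_total a b with hab | hab
  · exact .inr ⟨sub_nonpos.2 (hf hab), sub_nonpos.2 (hg hab)⟩
  · exact .inl ⟨sub_nonneg.2 (hf hab), sub_nonneg.2 (hg hab)⟩

theorem sum_abs_sum_ite_eq_le {U V G : Type*} [Fintype U] [Fintype V] [DecidableEq V]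
    [AddCommGroup G] [LinearOrder G] [IsOrderedAddMonoid G] (s : U → V) (a : U → G) :
    ∑ v, |∑ u, if s u = v then a u else 0| ≤ ∑ u, |a u| :=
  calc ∑ v, |∑ u, if s u = v then a u else 0|
      ≤ ∑ v, ∑ u, |if s u = v then a u else 0| :=
        sum_le_sum fun v _ => abs_sum_le_sum_abs _ _
    _ = ∑ v, ∑ u with s u = v, |a u| := by simp only [apply_ite abs, abs_zero, sum_filter]
    _ = ∑ u, |a u| := sum_fiberwise _ _ _

theorem h0_add_h1 (x : ℝ) : h0 x + h1 x = x := by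
  unfold h0 h1
  rcases le_total (x - ⌊x / 2⌋) (⌈x / 2⌉ : ℝ) with h | h
  · rw [min_eq_left h, max_eq_left (by linarith)]; ring
  · rw [min_eq_right h, max_eq_right (by linarith)]; ring

theorem h0_neg (x : ℝ) : h0 (-x) = -h1 x := by
  simp only [h0, h1, neg_div, Int.floor_neg, Int.ceil_neg, Int.cast_neg, ← min_neg_neg, neg_sub]
  rw [min_comm, sub_neg_eq_add, neg_add_eq_sub]

theorem h0_monotone : Monotone h0 := by
  intro a b hab
  have hhalf : a / 2 ≤ b / 2 := by linarith
  refine le_min ?_ ((min_le_right _ _).trans (by exact_mod_cast Int.ceil_mono hhalf))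
  rcases (Int.floor_mono hhalf).eq_or_lt with hfloor | hfloor
  · exact (min_le_left _ _).trans (by rw [hfloor]; linarith)
  · have hsep : ⌈a / 2⌉ ≤ ⌊b / 2⌋ := (Int.ceil_le_floor_add_one _).trans hfloor
    have hb : (⌊b / 2⌋ : ℝ) ≤ b / 2 := Int.floor_le _
    exact (min_le_right _ _).trans ((Int.cast_le.2 hsep).trans (by linarith))

theorem h1_monotone : Monotone h1 := by
  have : h1 = fun x => -h0 (-x) := funext fun x => by rw [h0_neg, neg_neg]
  exact this ▸ (h0_monotone.comp_antitone fun _ _ h => neg_le_neg h).neg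

theorem oneStep_nonexpansive_general {V : Type*} [Fintype V] [DecidableEq V]
    (s0 s1 : V → V) (x y : V → ℝ) :
    ∑ v : V, |oneStep s0 s1 x v - oneStep s0 s1 y v| ≤ ∑ v : V, |x v - y v| := by
  set d0 := fun u => h0 (x u) - h0 (y u)
  set d1 := fun u => h1 (x u) - h1 (y u)
  have hdiff : ∀ v, oneStep s0 s1 x v - oneStep s0 s1 y v =
      (∑ u, if s0 u = v then d0 u else 0) + ∑ u, if s1 u = v then d1 u else 0 := by
    intro v
    simp only [oneStep, add_sub_add_comm, ← sum_sub_distrib, ite_sub_ite, sub_zero, d0, d1]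
  calc ∑ v, |oneStep s0 s1 x v - oneStep s0 s1 y v|
      ≤ ∑ v, (|∑ u, if s0 u = v then d0 u else 0| + |∑ u, if s1 u = v then d1 u else 0|) :=
        sum_le_sum fun v _ => hdiff v ▸ abs_add_le _ _
    _ ≤ ∑ u, |d0 u| + ∑ u, |d1 u| := by
        rw [sum_add_distrib]
        exact add_le_add (sum_abs_sum_ite_eq_le s0 d0) (sum_abs_sum_ite_eq_le s1 d1)
    _ = ∑ u, |x u - y u| := by
        rw [← sum_add_distrib]
        exact sum_congr rfl fun u _ =>
          abs_sub_add_abs_sub_of_monotone h0_monotone h1_monotone h0_add_h1 _ _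

theorem oneStep_nonexpansive {V : Type*} [Fintype V] [DecidableEq V]
    (s0 s1 : V → V) (x y : V → ℝ) (hx : ∀ v, 0 ≤ x v) (hy : ∀ v, 0 ≤ y v) :
    ∑ v : V, |oneStep s0 s1 x v - oneStep s0 s1 y v| ≤ ∑ v : V, |x v - y v| :=
  oneStep_nonexpansive_general s0 s1 x y
end

section
/- Let g be the projection to non-terminals of the one-step update of a switch graph with terminals T and integer token numbers, and let x be a fixed point of g. If the induced edge value y(e) is non-integral for some edge e = (u, v) with u ∈ V∖T, then there exists a directed cycle through non-terminal vertices, containing e, on which every edge has a non-integral y-value. -/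
/-!
At a fixed point the inflow of a non-terminal equals its token number, and both out-edges of a
vertex with integral token number carry integral values. So a non-integral edge leaving a
non-terminal `v` forces a non-integral inflow at `v`, hence a non-integral edge entering `v`,
whose tail is again a non-terminal because terminals carry integral token numbers. Since at most
one out-edge of a vertex is non-integral, choosing such a predecessor edge is an injective map
on the finite set of non-integral edges, so every non-integral edge is periodic under it, i.e.
lies on a cycle of non-integral edges.
-/

open Finset

/-- Outflow of `v` in an edge flow `y`, where `y v false` is the value on the
    even out-edge `(v, s0 v)` and `y v true` on the odd out-edge `(v, s1 v)`. -/
def outflowR {V : Type*} (y : V → Bool → ℝ) (v : V) : ℝ := y v false + y v true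

/-- Inflow of `v` in an edge flow `y`. -/
def inflowR {V : Type*} [Fintype V] [DecidableEq V]
    (s0 s1 : V → V) (y : V → Bool → ℝ) (v : V) : ℝ :=
  (∑ u : V, if s0 u = v then y u false else 0)
    + (∑ u : V, if s1 u = v then y u true else 0)

open Function

lemma h0_or_h1_intCast (x : ℝ) : (∃ k : ℤ, h0 x = k) ∨ ∃ k : ℤ, h1 x = k := by
  rcases le_total (x - ⌊x / 2⌋) ⌈x / 2⌉ with h | h
  · exact .inr ⟨⌊x / 2⌋, max_eq_left (by linarith)⟩
  · exact .inl ⟨⌈x / 2⌉, min_eq_right h⟩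

lemma h0_intCast (k : ℤ) : ∃ m : ℤ, h0 k = m :=
  ⟨min (k - ⌊(k : ℝ) / 2⌋) ⌈(k : ℝ) / 2⌉, by push_cast [h0]; rfl⟩

lemma h1_intCast (k : ℤ) : ∃ m : ℤ, h1 k = m :=
  ⟨max ⌊(k : ℝ) / 2⌋ (k - ⌈(k : ℝ) / 2⌉), by push_cast [h1]; rfl⟩

theorem exists_cycle_of_forall_exists_pred {α : Type*} [Finite α] (R : α → α → Prop)
    (hpred : ∀ a, ∃ p, R p a) (hsucc : ∀ p a b, R p a → R p b → a = b) (a : α) :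
    ∃ m, 1 ≤ m ∧ ∃ c : ℕ → α, c 0 = a ∧ c m = a ∧ ∀ i < m, R (c i) (c (i + 1)) := by
  choose pred hR using hpred
  have hinj : Injective pred := fun a b hab => hsucc _ a b (hR a) (hab ▸ hR b)
  obtain ⟨m, hm, hper⟩ := hinj.mem_periodicPts a
  refine ⟨m, hm, fun i => pred^[m - i] a, hper, by simp, fun i hi => ?_⟩
  have : m - i = m - (i + 1) + 1 := by omega
  simp only [this, iterate_succ_apply']
  exact hR _

section SwitchGraph

variable {V : Type*} {s0 s1 : V → V} {ext : V → ℝ} {y : V → Bool → ℝ}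

lemma exists_intCast_of_tail_intCast
    (hy : ∀ v, y v false = h0 (ext v) ∧ y v true = h1 (ext v))
    {v : V} {k : ℤ} (hk : ext v = k) (b : Bool) : ∃ m : ℤ, y v b = m := by
  cases b
  · rw [(hy v).1, hk]; exact h0_intCast k
  · rw [(hy v).2, hk]; exact h1_intCast k

lemma eq_of_not_intCast (hy : ∀ v, y v false = h0 (ext v) ∧ y v true = h1 (ext v))
    {v : V} {b c : Bool} (hb : ¬ ∃ k : ℤ, y v b = k) (hc : ¬ ∃ k : ℤ, y v c = k) : b = c := by
  have : ¬ ((¬ ∃ k : ℤ, y v false = k) ∧ ¬ ∃ k : ℤ, y v true = k) := by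
    rw [(hy v).1, (hy v).2]
    rintro ⟨h0frac, h1frac⟩
    exact (h0_or_h1_intCast (ext v)).elim h0frac h1frac
  cases b <;> cases c <;> tauto

lemma oneStep_eq_inflowR [Fintype V] [DecidableEq V]
    (hy : ∀ v, y v false = h0 (ext v) ∧ y v true = h1 (ext v)) (v : V) :
    oneStep s0 s1 ext v = inflowR s0 s1 y v := by
  simp only [oneStep, inflowR, hy]

lemma inflowR_intCast [Fintype V] [DecidableEq V] {v : V}
    (h : ∀ p (b : Bool), (if b then s1 p else s0 p) = v → ∃ k : ℤ, y p b = k) :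
    ∃ k : ℤ, inflowR s0 s1 y v = k := by
  let Z := (Int.castAddHom ℝ).range
  have hmem : ∀ p b, (if b then s1 p else s0 p) = v → y p b ∈ Z := fun p b hpb => by
    obtain ⟨k, hk⟩ := h p b hpb
    exact ⟨k, hk.symm⟩
  have : inflowR s0 s1 y v ∈ Z := by
    refine Z.add_mem (Z.sum_mem fun p _ => ?_) (Z.sum_mem fun p _ => ?_)
    · split_ifs with hp
      exacts [hmem p false hp, Z.zero_mem]
    · split_ifs with hp
      exacts [hmem p true hp, Z.zero_mem]
  obtain ⟨k, hk⟩ := this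
  exact ⟨k, hk.symm⟩

lemma exists_fractional_in_edge [Fintype V] [DecidableEq V]
    {T : Finset V} {t : V → ℕ} {x : V → ℝ}
    (hext : ∀ v, ext v = if v ∈ T then (t v : ℝ) else x v)
    (hfix : ∀ v ∉ T, oneStep s0 s1 ext v = x v)
    (hy : ∀ v, y v false = h0 (ext v) ∧ y v true = h1 (ext v))
    {v : V} (hv : v ∉ T) {b : Bool} (hb : ¬ ∃ k : ℤ, y v b = k) :
    ∃ p c, p ∉ T ∧ (¬ ∃ k : ℤ, y p c = k) ∧ (if c then s1 p else s0 p) = v := by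
  by_contra hcon
  have hin : ∀ p (c : Bool), (if c then s1 p else s0 p) = v → ∃ k : ℤ, y p c = k := by
    intro p c hpc
    by_cases hp : p ∈ T
    · exact exists_intCast_of_tail_intCast hy (k := t p) (by simp [hext, hp]) c
    · by_contra hfrac
      exact hcon ⟨p, c, hp, hfrac, hpc⟩
  obtain ⟨k, hk⟩ := inflowR_intCast hin
  have hextv : ext v = k := by
    rw [hext, if_neg hv, ← hfix v hv, oneStep_eq_inflowR hy, hk]
  exact hb (exists_intCast_of_tail_intCast hy hextv b)

end SwitchGraph

theorem fractional_edge_lies_on_fractional_cycle_general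
    {V : Type*} [Fintype V] [DecidableEq V]
    (s0 s1 : V → V) (T : Finset V) (t : V → ℕ) (x : V → ℝ)
    (ext : V → ℝ) (hext : ∀ v, ext v = if v ∈ T then (t v : ℝ) else x v)
    (hfix : ∀ v ∉ T, oneStep s0 s1 ext v = x v)
    (y : V → Bool → ℝ)
    (hy : ∀ v, y v false = h0 (ext v) ∧ y v true = h1 (ext v))
    (u : V) (hu : u ∉ T) (b0 : Bool) (hfrac : ¬ ∃ k : ℤ, y u b0 = (k : ℝ)) :
    ∃ (m : ℕ) (c : ℕ → V) (bb : ℕ → Bool), 1 ≤ m ∧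
      c 0 = u ∧ bb 0 = b0 ∧ c m = u ∧
      ∀ i < m, c i ∉ T ∧
        (if bb i then s1 (c i) else s0 (c i)) = c (i + 1) ∧
        ¬ ∃ k : ℤ, y (c i) (bb i) = (k : ℝ) := by
  let FracEdge := {e : V × Bool // e.1 ∉ T ∧ ¬ ∃ k : ℤ, y e.1 e.2 = k}
  let Follows (e f : FracEdge) : Prop := (if e.1.2 then s1 e.1.1 else s0 e.1.1) = f.1.1
  have hpred : ∀ f : FracEdge, ∃ e, Follows e f := fun f => by
    obtain ⟨p, c, hp, hpc, hhead⟩ := exists_fractional_in_edge hext hfix hy f.2.1 f.2.2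
    exact ⟨⟨(p, c), hp, hpc⟩, hhead⟩
  have hsucc : ∀ e f f' : FracEdge, Follows e f → Follows e f' → f = f' := fun _ f f' hf hf' =>
    have htail : f.1.1 = f'.1.1 := hf.symm.trans hf'
    Subtype.ext (Prod.ext htail (eq_of_not_intCast hy f.2.2 (htail ▸ f'.2.2)))
  obtain ⟨m, hm, c, hc0, hcm, hcyc⟩ :=
    exists_cycle_of_forall_exists_pred Follows hpred hsucc ⟨(u, b0), hu, hfrac⟩
  refine ⟨m, fun i => (c i).1.1, fun i => (c i).1.2, hm, by simp only [hc0], by simp only [hc0],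
    by simp only [hcm], fun i hi => ⟨(c i).2.1, hcyc i hi, (c i).2.2⟩⟩

theorem fractional_edge_lies_on_fractional_cycle
    {V : Type*} [Fintype V] [DecidableEq V]
    (s0 s1 : V → V) (T : Finset V) (t : V → ℕ) (x : V → ℝ)
    (hx : ∀ v, 0 ≤ x v)
    (ext : V → ℝ) (hext : ∀ v, ext v = if v ∈ T then (t v : ℝ) else x v)
    (hfix : ∀ v ∉ T, oneStep s0 s1 ext v = x v)
    (y : V → Bool → ℝ)
    (hy : ∀ v, y v false = h0 (ext v) ∧ y v true = h1 (ext v))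
    (u : V) (hu : u ∉ T) (b0 : Bool) (hfrac : ¬ ∃ k : ℤ, y u b0 = (k : ℝ)) :
    ∃ (m : ℕ) (c : ℕ → V) (bb : ℕ → Bool), 1 ≤ m ∧
      c 0 = u ∧ bb 0 = b0 ∧ c m = u ∧
      ∀ i < m, c i ∉ T ∧
        (if bb i then s1 (c i) else s0 (c i)) = c (i + 1) ∧
        ¬ ∃ k : ℤ, y (c i) (bb i) = (k : ℝ) :=
  fractional_edge_lies_on_fractional_cycle_general s0 s1 T t x ext hext hfix y hy u hu b0 hfrac
end
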